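/- arXiv:2507.01696 — 3 statements merged into one kernel-verified Lean document; each statement's English description precedes it below -/
import Mathlib

section
/- Let n ∈ ℕ, let K be an n×n symmetric matrix with nonnegative entries K_{ij} and positive row sums d_i = Σ_{j=1}^n K_{ij}, let ε be a real with 0 < ε ≤ 1/6, and let d̂_1,…,d̂_n be reals with (1−ε)·d_i ≤ d̂_i ≤ (1+ε)·d_i for every i. Then for every i ∈ {1,…,n}, Σ_{j : d̂_j > d̂_i} K_{ij}/d_j ≤ 2. -/
open scoped Classical

/-- For a symmetric nonnegative matrix `K` with positive row
sums `d i = ∑ j, K i j` and `(1±ε)`-accurate estimates `dhat i` with `ε ≤ 1/6`,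
for every `i` one has `∑_{j : dhat j > dhat i} K i j / d j ≤ 2`. -/
theorem higher_degree_neighbour_sum_le_two
    (n : ℕ) (K : Fin n → Fin n → ℝ)
    (hsym : ∀ i j, K i j = K j i) (hnonneg : ∀ i j, 0 ≤ K i j)
    (d : Fin n → ℝ) (hd : ∀ i, d i = ∑ j, K i j) (hdpos : ∀ i, 0 < d i)
    (ε : ℝ) (hε : 0 < ε) (hε' : ε ≤ 1 / 6)
    (dhat : Fin n → ℝ)
    (hest : ∀ i, (1 - ε) * d i ≤ dhat i ∧ dhat i ≤ (1 + ε) * d i) :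
    ∀ i, ∑ j ∈ Finset.univ.filter (fun j => dhat i < dhat j), K i j / d j ≤ 2 := by
  intro i
  have key : ∀ j, dhat i < dhat j → d i / 2 ≤ d j := by
    intro j hj
    have h1 := (hest i).1
    have h2 := (hest j).2
    have h3 : (1 - ε) * d i < (1 + ε) * d j := by linarith
    nlinarith [hdpos i, hdpos j]
  calc ∑ j ∈ Finset.univ.filter (fun j => dhat i < dhat j), K i j / d j
      ≤ ∑ j ∈ Finset.univ.filter (fun j => dhat i < dhat j), 2 * (K i j / d i) := by
        apply Finset.sum_le_sum
        intro j hj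
        have hj' : dhat i < dhat j := (Finset.mem_filter.mp hj).2
        have hdj := key j hj'
        have hdi := hdpos i
        have hdjpos := hdpos j
        have hK := hnonneg i j
        rw [div_le_iff₀ hdjpos]
        have heq : 2 * (K i j / d i) * d j = K i j * (2 * d j) / d i := by ring
        rw [heq, le_div_iff₀ hdi]
        nlinarith
    _ ≤ ∑ j, 2 * (K i j / d i) := by
        apply Finset.sum_le_sum_of_subset_of_nonneg (Finset.filter_subset _ _)
        intro j _ _
        exact mul_nonneg (by norm_num) (div_nonneg (hnonneg i j) (hdpos i).le)
    _ = 2 * ((∑ j, K i j) / d i) := by rw [← Finset.mul_sum, ← Finset.sum_div]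
    _ = 2 := by rw [← hd i, div_self (hdpos i).ne', mul_one]
end

section
/- Let a, b, A be positive reals with A·(1/a + 1/b) < 1. Define p̂ = A·(1/a + 1/b) − A²/(a·b) and ŵ = A/min{a, b}. Then ŵ/2 ≤ p̂ ≤ 2·ŵ. -/
/-- Comparison of the two rescaling factors: with
`p̂ = A(1/a + 1/b) - A²/(ab)` and `ŵ = A / min a b`, if `A(1/a + 1/b) < 1`,
then `ŵ/2 ≤ p̂ ≤ 2ŵ`. -/
theorem rescaling_factor_comparison
    (a b A : ℝ) (ha : 0 < a) (hb : 0 < b) (hA : 0 < A)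
    (h : A * (1 / a + 1 / b) < 1) :
    A / min a b / 2 ≤ A * (1 / a + 1 / b) - A ^ 2 / (a * b) ∧
      A * (1 / a + 1 / b) - A ^ 2 / (a * b) ≤ 2 * (A / min a b) := by
  have hx : (0:ℝ) < A / a := by positivity
  have hy : (0:ℝ) < A / b := by positivity
  have hsum : A / a + A / b < 1 := by
    have : A * (1 / a + 1 / b) = A / a + A / b := by ring
    linarith [this ▸ h]
  have hp : A * (1 / a + 1 / b) - A ^ 2 / (a * b) = A / a + A / b - (A / a) * (A / b) := by
    field_simp
  rw [hp]
  rcases le_total a b with hab | hab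
  · rw [min_eq_left hab]
    have hyx : A / b ≤ A / a := div_le_div_of_nonneg_left hA.le ha hab
    constructor
    · nlinarith
    · nlinarith
  · rw [min_eq_right hab]
    have hyx : A / a ≤ A / b := div_le_div_of_nonneg_left hA.le hb hab
    constructor
    · nlinarith
    · nlinarith
end

section
/- Let m ∈ ℕ and set μ_i = 2^i for i ∈ {0,…,m}. Let K₁, T ∈ ℕ, let S_0 ≥ 0 and k_1,…,k_T ≥ 0 be reals with S_0 + Σ_{t=1}^T k_t ≤ 2^m, and for each t ∈ {1,…,T} let i(t) be the least index i ∈ {0,…,m} with S_0 + Σ_{s=1}^t k_s ≤ μ_i. Let (E_{a,t}) for a ∈ {1,…,K₁} and t ∈ {1,…,T} be events on a probability space with P[E_{a,t}] ≤ 2·k_t/μ_{i(t)} for all a and t. Then the expected number of pairs (a,t) for which E_{a,t} occurs is at most 2·K₁·(m+1). -/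
open MeasureTheory

/-- Bounding the expected number of estimator updates:
`k t` are nonnegative with `S0 + ∑ k ≤ 2^m`, `i t` is the least index
`i ∈ {0,…,m}` with partial sum `≤ 2^i`, and the events `E a t` have
probability at most `2·k t / 2^(i t)`; then the expected number of pairs
`(a,t)` for which `E a t` occurs is at most `2·K₁·(m+1)`. -/
theorem expected_number_of_updates
    {Ω : Type*} [MeasurableSpace Ω] (P : Measure Ω) [IsProbabilityMeasure P]
    (m K₁ T : ℕ) (S0 : ℝ) (hS0 : 0 ≤ S0)
    (k : ℕ → ℝ) (hk : ∀ t ∈ Finset.Icc 1 T, 0 ≤ k t)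
    (hsum : S0 + ∑ t ∈ Finset.Icc 1 T, k t ≤ 2 ^ m)
    (i : ℕ → ℕ)
    (hi : ∀ t ∈ Finset.Icc 1 T,
      IsLeast {j | j ≤ m ∧ S0 + ∑ s ∈ Finset.Icc 1 t, k s ≤ 2 ^ j} (i t))
    (E : ℕ → ℕ → Set Ω)
    (hP : ∀ a ∈ Finset.Icc 1 K₁, ∀ t ∈ Finset.Icc 1 T,
      (P (E a t)).toReal ≤ 2 * k t / 2 ^ (i t)) :
    ∑ a ∈ Finset.Icc 1 K₁, ∑ t ∈ Finset.Icc 1 T, (P (E a t)).toReal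
      ≤ 2 * K₁ * (m + 1) := by
  -- main bound: for each j, the k's with i t = j sum to at most 2^j
  have fiber : ∀ j, ∑ t ∈ (Finset.Icc 1 T).filter (fun t => i t = j), k t ≤ 2 ^ j := by
    intro j
    set A := (Finset.Icc 1 T).filter (fun t => i t = j) with hA
    rcases A.eq_empty_or_nonempty with h | h
    · simp only [h, Finset.sum_empty]; positivity
    · set t0 := A.max' h with ht0
      have ht0A : t0 ∈ A := A.max'_mem h
      have ht0T : t0 ∈ Finset.Icc 1 T := (Finset.mem_filter.mp ht0A).1
      have hit0 : i t0 = j := (Finset.mem_filter.mp ht0A).2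
      have hsub : A ⊆ Finset.Icc 1 t0 := by
        intro t ht
        have htT := (Finset.mem_filter.mp ht).1
        rw [Finset.mem_Icc] at htT ⊢
        exact ⟨htT.1, A.le_max' t ht⟩
      have h1 : ∑ t ∈ A, k t ≤ ∑ t ∈ Finset.Icc 1 t0, k t := by
        apply Finset.sum_le_sum_of_subset_of_nonneg hsub
        intro t ht _
        apply hk
        rw [Finset.mem_Icc] at ht ⊢
        exact ⟨ht.1, ht.2.trans (Finset.mem_Icc.mp ht0T).2⟩
      have h2 : S0 + ∑ s ∈ Finset.Icc 1 t0, k s ≤ 2 ^ (i t0) := ((hi t0 ht0T).1).2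
      rw [hit0] at h2
      linarith [h1]
  have inner : ∀ a ∈ Finset.Icc 1 K₁,
      ∑ t ∈ Finset.Icc 1 T, (P (E a t)).toReal ≤ 2 * (m + 1) := by
    intro a ha
    have step1 : ∑ t ∈ Finset.Icc 1 T, (P (E a t)).toReal
        ≤ ∑ t ∈ Finset.Icc 1 T, 2 * k t / 2 ^ (i t) :=
      Finset.sum_le_sum (fun t ht => hP a ha t ht)
    have step2 : ∑ t ∈ Finset.Icc 1 T, 2 * k t / 2 ^ (i t)
        = ∑ j ∈ Finset.range (m + 1),
            ∑ t ∈ (Finset.Icc 1 T).filter (fun t => i t = j), 2 * k t / 2 ^ (i t) := by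
      rw [Finset.sum_fiberwise_of_maps_to]
      intro t ht
      exact Finset.mem_range.mpr (Nat.lt_succ_of_le ((hi t ht).1).1)
    have step3 : ∀ j ∈ Finset.range (m + 1),
        ∑ t ∈ (Finset.Icc 1 T).filter (fun t => i t = j), 2 * k t / 2 ^ (i t) ≤ 2 := by
      intro j _
      have : ∑ t ∈ (Finset.Icc 1 T).filter (fun t => i t = j), 2 * k t / 2 ^ (i t)
          = (2 / 2 ^ j) * ∑ t ∈ (Finset.Icc 1 T).filter (fun t => i t = j), k t := by
        rw [Finset.mul_sum]
        apply Finset.sum_congr rfl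
        intro t ht
        rw [(Finset.mem_filter.mp ht).2]
        ring
      rw [this]
      have h2j : (0:ℝ) < 2 ^ j := by positivity
      calc (2 / 2 ^ j) * ∑ t ∈ (Finset.Icc 1 T).filter (fun t => i t = j), k t
          ≤ (2 / 2 ^ j) * 2 ^ j := by
            apply mul_le_mul_of_nonneg_left (fiber j) (by positivity)
        _ = 2 := by field_simp
    calc ∑ t ∈ Finset.Icc 1 T, (P (E a t)).toReal
        ≤ ∑ j ∈ Finset.range (m + 1),
            ∑ t ∈ (Finset.Icc 1 T).filter (fun t => i t = j), 2 * k t / 2 ^ (i t) := by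
          rw [← step2]; exact step1
      _ ≤ ∑ _j ∈ Finset.range (m + 1), (2:ℝ) := Finset.sum_le_sum step3
      _ = 2 * (m + 1) := by simp [mul_comm]
  calc ∑ a ∈ Finset.Icc 1 K₁, ∑ t ∈ Finset.Icc 1 T, (P (E a t)).toReal
      ≤ ∑ _a ∈ Finset.Icc 1 K₁, 2 * ((m:ℝ) + 1) := Finset.sum_le_sum inner
    _ = K₁ * (2 * (m + 1)) := by simp
    _ = 2 * K₁ * (m + 1) := by ring
end
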